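/- Let Γ=(G,σ) be a weighted signed graph and μ a measure on V. For any switching function θ : V → {+1,−1} and any pair of disjoint subsets V₁, V₂ ⊆ V with V₁ ∪ V₂ ≠ ∅, there exists a pair of disjoint subsets V₁', V₂' ⊆ V such that V₁' ∪ V₂' = V₁ ∪ V₂ and β^{σ^θ}(V₁', V₂') = β^σ(V₁, V₂). -/
import Mathlib


open Finset Real

open scoped Classical

noncomputable section

namespace SignedGraph

variable {N : ℕ}

/-- The degree `d(u) = Σ_v w(u,v)` of a vertex. -/
def deg (w : Fin N → Fin N → ℝ) (u : Fin N) : ℝ := ∑ v, w u v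

/-- Hypotheses making `(w, sgn)` a weighted signed graph: `w` is a symmetric nonnegative
weight function vanishing on the diagonal and `sgn` is a symmetric `±1`-valued signature. -/
structure IsWSG {N : ℕ} (w : Fin N → Fin N → ℝ) (sgn : Fin N → Fin N → ℝ) : Prop where
  w_symm : ∀ u v, w u v = w v u
  w_nonneg : ∀ u v, 0 ≤ w u v
  w_loopless : ∀ u, w u u = 0
  sgn_symm : ∀ u v, sgn u v = sgn v u
  sgn_pm : ∀ u v, sgn u v = 1 ∨ sgn u v = -1

/-- The signature obtained from `sgn` by switching with the function `θ : V → {±1}`. -/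
def switchSgn (sgn : Fin N → Fin N → ℝ) (θ : Fin N → ℝ) : Fin N → Fin N → ℝ :=
  fun u v => θ u * sgn u v * θ v

/-- `|E(S,T)| = Σ_{u∈S, v∈T} w(u,v)`. -/
def EE (w : Fin N → Fin N → ℝ) (S T : Finset (Fin N)) : ℝ := ∑ u ∈ S, ∑ v ∈ T, w u v

/-- `|E⁺(S,T)|`: total weight of positive edges from `S` to `T`. -/
def Epos (w sgn : Fin N → Fin N → ℝ) (S T : Finset (Fin N)) : ℝ :=
  ∑ u ∈ S, ∑ v ∈ T, if sgn u v = 1 then w u v else 0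

/-- `|E⁻(S,T)|`: total weight of negative edges from `S` to `T`. -/
def Eneg (w sgn : Fin N → Fin N → ℝ) (S T : Finset (Fin N)) : ℝ :=
  ∑ u ∈ S, ∑ v ∈ T, if sgn u v = -1 then w u v else 0

/-- `vol_μ(S) = Σ_{u∈S} μ(u)`. -/
def vol (μ : Fin N → ℝ) (S : Finset (Fin N)) : ℝ := ∑ u ∈ S, μ u

/-- The signed bipartiteness ratio `β^σ(V₁,V₂)`. -/
def betaR (w sgn : Fin N → Fin N → ℝ) (μ : Fin N → ℝ) (V1 V2 : Finset (Fin N)) : ℝ :=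
  (2 * Epos w sgn V1 V2 + Eneg w sgn V1 V1 + Eneg w sgn V2 V2 +
      EE w (V1 ∪ V2) (V1 ∪ V2)ᶜ) / vol μ (V1 ∪ V2)

/-- The signed Cheeger constant `h₁^σ(μ)`: the minimum of `β^σ(V₁,V₂)` over all pairs of
disjoint subsets with nonempty union. -/
def h1 (w sgn : Fin N → Fin N → ℝ) (μ : Fin N → ℝ) : ℝ :=
  sInf {x | ∃ V1 V2 : Finset (Fin N),
    Disjoint V1 V2 ∧ (V1 ∪ V2).Nonempty ∧ x = betaR w sgn μ V1 V2}


/-- Indicator function: 1 on `V1`, -1 on `V2`, 0 elsewhere. -/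
def xf (V1 V2 : Finset (Fin N)) (u : Fin N) : ℝ :=
  if u ∈ V1 then 1 else if u ∈ V2 then -1 else 0

lemma sum_mem_eq_sum_ite {f : Fin N → ℝ} (S : Finset (Fin N)) :
    ∑ u ∈ S, f u = ∑ u : Fin N, (if u ∈ S then f u else 0) := by
  rw [Finset.sum_ite_mem, Finset.univ_inter]

lemma numer_formula (w sgn : Fin N → Fin N → ℝ) (V1 V2 : Finset (Fin N))
    (hdisj : Disjoint V1 V2) :
    Epos w sgn V1 V2 + Epos w sgn V2 V1 + Eneg w sgn V1 V1 + Eneg w sgn V2 V2 =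
      ∑ u, ∑ v, (if sgn u v * xf V1 V2 u * xf V1 V2 v = -1 then w u v else 0) := by
  have key : ∀ (A B : Finset (Fin N)) (P : Fin N → Fin N → Prop) [∀ u v, Decidable (P u v)],
      (∑ u ∈ A, ∑ v ∈ B, if P u v then w u v else 0) =
        ∑ u : Fin N, ∑ v : Fin N, if u ∈ A ∧ v ∈ B ∧ P u v then w u v else 0 := by
    intro A B P _
    rw [sum_mem_eq_sum_ite A]
    refine Finset.sum_congr rfl fun u _ => ?_
    by_cases hu : u ∈ A
    · simp only [hu, if_true, true_and]
      rw [sum_mem_eq_sum_ite B]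
      refine Finset.sum_congr rfl fun v _ => ?_
      by_cases hv : v ∈ B <;> simp [hv, and_assoc]
    · simp [hu]
  unfold Epos Eneg
  rw [key V1 V2, key V2 V1, key V1 V1, key V2 V2]
  rw [← Finset.sum_add_distrib, ← Finset.sum_add_distrib, ← Finset.sum_add_distrib]
  refine Finset.sum_congr rfl fun u _ => ?_
  rw [← Finset.sum_add_distrib, ← Finset.sum_add_distrib, ← Finset.sum_add_distrib]
  refine Finset.sum_congr rfl fun v _ => ?_
  have hu2 : u ∈ V1 → u ∉ V2 := fun h => Finset.disjoint_left.mp hdisj h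
  have hv2 : v ∈ V1 → v ∉ V2 := fun h => Finset.disjoint_left.mp hdisj h
  unfold xf
  by_cases h1 : u ∈ V1 <;> by_cases h2 : u ∈ V2 <;>
    by_cases h3 : v ∈ V1 <;> by_cases h4 : v ∈ V2 <;>
    first
      | (exact absurd h2 (hu2 h1))
      | (exact absurd h4 (hv2 h3))
      | (simp only [h1, h2, h3, h4, if_true, if_false, true_and, false_and, and_false,
          and_true, mul_one, mul_zero, mul_neg, neg_eq_iff_eq_neg, neg_neg, zero_eq_neg] <;>
          split_ifs <;> simp_all <;> linarith)

lemma xf_switch (V1 V2 : Finset (Fin N)) (θ : Fin N → ℝ) (hθ : ∀ u, θ u = 1 ∨ θ u = -1)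
    (hdisj : Disjoint V1 V2) (u : Fin N) :
    xf (V1.filter (fun a => θ a = 1) ∪ V2.filter (fun a => θ a = -1))
       (V1.filter (fun a => θ a = -1) ∪ V2.filter (fun a => θ a = 1)) u
      = θ u * xf V1 V2 u := by
  have hu2 : u ∈ V1 → u ∉ V2 := fun h => Finset.disjoint_left.mp hdisj h
  unfold xf
  rcases hθ u with h | h <;>
    by_cases h1 : u ∈ V1 <;> by_cases h2 : u ∈ V2 <;>
    simp [Finset.mem_union, Finset.mem_filter, h, h1, h2] <;>
    first | (exact absurd h2 (hu2 h1)) | norm_num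

/-- For any switching function `θ` and any pair of disjoint subsets
`V₁, V₂` with nonempty union, there is a pair of disjoint subsets `V₁', V₂'` with the same
union such that `β^{σ^θ}(V₁',V₂') = β^σ(V₁,V₂)`. -/
theorem switch_move {N : ℕ} (w sgn : Fin N → Fin N → ℝ) (hG : IsWSG w sgn)
    (μ : Fin N → ℝ) (hμ : ∀ u, 0 < μ u)
    (θ : Fin N → ℝ) (hθ : ∀ u, θ u = 1 ∨ θ u = -1)
    (V1 V2 : Finset (Fin N)) (hdisj : Disjoint V1 V2) (hne : (V1 ∪ V2).Nonempty) :
    ∃ V1' V2' : Finset (Fin N), Disjoint V1' V2' ∧ V1' ∪ V2' = V1 ∪ V2 ∧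
      betaR w (switchSgn sgn θ) μ V1' V2' = betaR w sgn μ V1 V2 := by
  classical
  set S1 := V1.filter (fun a => θ a = 1) ∪ V2.filter (fun a => θ a = -1) with hS1
  set S2 := V1.filter (fun a => θ a = -1) ∪ V2.filter (fun a => θ a = 1) with hS2
  have hd := Finset.disjoint_left.mp hdisj
  have hd' : Disjoint S1 S2 := by
    rw [Finset.disjoint_left]
    intro a ha hb
    simp only [hS1, hS2, Finset.mem_union, Finset.mem_filter] at ha hb
    rcases ha with ⟨h1, ht⟩ | ⟨h2, ht⟩ <;> rcases hb with ⟨h1', ht'⟩ | ⟨h2', ht'⟩ <;>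
      first | linarith | exact hd ‹a ∈ V1› ‹a ∈ V2›
  have hU : S1 ∪ S2 = V1 ∪ V2 := by
    ext a
    simp only [hS1, hS2, Finset.mem_union, Finset.mem_filter]
    rcases hθ a with h | h <;> rw [h] <;> norm_num <;> tauto
  refine ⟨S1, S2, hd', hU, ?_⟩
  have hσ'symm : ∀ u v, switchSgn sgn θ u v = switchSgn sgn θ v u := by
    intro u v; unfold switchSgn; rw [hG.sgn_symm u v]; ring
  have epos_swap : ∀ (s : Fin N → Fin N → ℝ), (∀ u v, s u v = s v u) →
      ∀ A B, Epos w s A B = Epos w s B A := by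
    intro s hs A B
    unfold Epos
    rw [Finset.sum_comm]
    exact Finset.sum_congr rfl fun u _ => Finset.sum_congr rfl fun v _ => by
      rw [hs u v, hG.w_symm u v]
  have hnum : Epos w (switchSgn sgn θ) S1 S2 + Epos w (switchSgn sgn θ) S2 S1 +
      Eneg w (switchSgn sgn θ) S1 S1 + Eneg w (switchSgn sgn θ) S2 S2 =
      Epos w sgn V1 V2 + Epos w sgn V2 V1 + Eneg w sgn V1 V1 + Eneg w sgn V2 V2 := by
    rw [numer_formula w _ S1 S2 hd', numer_formula w sgn V1 V2 hdisj]
    refine Finset.sum_congr rfl fun u _ => Finset.sum_congr rfl fun v _ => ?_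
    rw [hS1, hS2, xf_switch V1 V2 θ hθ hdisj u, xf_switch V1 V2 θ hθ hdisj v]
    have h2u : θ u * θ u = 1 := by rcases hθ u with h | h <;> rw [h] <;> norm_num
    have h2v : θ v * θ v = 1 := by rcases hθ v with h | h <;> rw [h] <;> norm_num
    have hprod : switchSgn sgn θ u v * (θ u * xf V1 V2 u) * (θ v * xf V1 V2 v) =
        sgn u v * xf V1 V2 u * xf V1 V2 v := by
      unfold switchSgn
      calc θ u * sgn u v * θ v * (θ u * xf V1 V2 u) * (θ v * xf V1 V2 v)
          = (θ u * θ u) * (θ v * θ v) * (sgn u v * xf V1 V2 u * xf V1 V2 v) := by ring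
        _ = sgn u v * xf V1 V2 u * xf V1 V2 v := by rw [h2u, h2v]; ring
    rw [hprod]
  have hmain : 2 * Epos w (switchSgn sgn θ) S1 S2 + Eneg w (switchSgn sgn θ) S1 S1 +
      Eneg w (switchSgn sgn θ) S2 S2 =
      2 * Epos w sgn V1 V2 + Eneg w sgn V1 V1 + Eneg w sgn V2 V2 := by
    have e1 := epos_swap (switchSgn sgn θ) hσ'symm S1 S2
    have e2 := epos_swap sgn hG.sgn_symm V1 V2
    linarith
  unfold betaR
  rw [hU, hmain]

end SignedGraph
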